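/- arXiv:1808.00290 — 5 statements merged into one kernel-verified Lean document; each statement's English description precedes it below -/
import Mathlib

section
/- Let Δ = diag(δ₁, δ₂, δ₃) with δ₁ ≥ δ₂ ≥ δ₃ > 0, and a, b ∈ ℝ³. Then δ₃²‖a × b‖ ≤ ‖(Δa) × (Δb)‖ ≤ δ₁²‖a × b‖. -/
open Matrix

noncomputable def e3norm (a : Fin 3 → ℝ) : ℝ := Real.sqrt (∑ i, (a i) ^ 2)

theorem diag_mulVec_cross_norm_bounds
    (δ₁ δ₂ δ₃ : ℝ) (h12 : δ₁ ≥ δ₂) (h23 : δ₂ ≥ δ₃) (h3 : 0 < δ₃)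
    (a b : Fin 3 → ℝ) :
    δ₃ ^ 2 * e3norm (crossProduct a b) ≤
        e3norm (crossProduct (Matrix.diagonal ![δ₁, δ₂, δ₃] *ᵥ a)
          (Matrix.diagonal ![δ₁, δ₂, δ₃] *ᵥ b)) ∧
      e3norm (crossProduct (Matrix.diagonal ![δ₁, δ₂, δ₃] *ᵥ a)
          (Matrix.diagonal ![δ₁, δ₂, δ₃] *ᵥ b)) ≤
        δ₁ ^ 2 * e3norm (crossProduct a b) := by
  have h2 : 0 < δ₂ := lt_of_lt_of_le h3 h23
  have h1 : 0 < δ₁ := lt_of_lt_of_le h2 h12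
  set c : Fin 3 → ℝ := crossProduct a b with hcdef
  have hc : (crossProduct (Matrix.diagonal ![δ₁, δ₂, δ₃] *ᵥ a)
      (Matrix.diagonal ![δ₁, δ₂, δ₃] *ᵥ b)) = ![δ₂ * δ₃ * c 0, δ₁ * δ₃ * c 1, δ₁ * δ₂ * c 2] := by
    funext i
    fin_cases i <;>
      simp [cross_apply, mulVec_diagonal, hcdef] <;> ring
  rw [hc]
  have hS : ∑ i, ((![δ₂ * δ₃ * c 0, δ₁ * δ₃ * c 1, δ₁ * δ₂ * c 2]) i) ^ 2
      = (δ₂ * δ₃) ^ 2 * c 0 ^ 2 + (δ₁ * δ₃) ^ 2 * c 1 ^ 2 + (δ₁ * δ₂) ^ 2 * c 2 ^ 2 := by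
    simp [Fin.sum_univ_three]; ring
  have hSc : ∑ i, (c i) ^ 2 = c 0 ^ 2 + c 1 ^ 2 + c 2 ^ 2 := by
    simp [Fin.sum_univ_three]
  unfold e3norm
  rw [hS, hSc]
  constructor
  · have : δ₃ ^ 2 * Real.sqrt (c 0 ^ 2 + c 1 ^ 2 + c 2 ^ 2)
        = Real.sqrt ((δ₃ ^ 2) ^ 2 * (c 0 ^ 2 + c 1 ^ 2 + c 2 ^ 2)) := by
      rw [Real.sqrt_mul (by positivity), Real.sqrt_sq (by positivity)]
    rw [this]
    apply Real.sqrt_le_sqrt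
    have e0 : (δ₃ ^ 2) ^ 2 ≤ (δ₂ * δ₃) ^ 2 :=
      pow_le_pow_left₀ (by positivity) (by nlinarith [mul_nonneg h3.le (sub_nonneg.2 h23)]) 2
    have e1 : (δ₃ ^ 2) ^ 2 ≤ (δ₁ * δ₃) ^ 2 :=
      pow_le_pow_left₀ (by positivity) (by nlinarith [mul_nonneg h3.le (sub_nonneg.2 (h23.trans h12))]) 2
    have e2 : (δ₃ ^ 2) ^ 2 ≤ (δ₁ * δ₂) ^ 2 :=
      pow_le_pow_left₀ (by positivity)
        (by nlinarith [mul_nonneg h3.le (sub_nonneg.2 (h23.trans h12)),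
          mul_nonneg h1.le (sub_nonneg.2 h23)]) 2
    nlinarith [mul_le_mul_of_nonneg_right e0 (sq_nonneg (c 0)),
      mul_le_mul_of_nonneg_right e1 (sq_nonneg (c 1)),
      mul_le_mul_of_nonneg_right e2 (sq_nonneg (c 2))]
  · have : δ₁ ^ 2 * Real.sqrt (c 0 ^ 2 + c 1 ^ 2 + c 2 ^ 2)
        = Real.sqrt ((δ₁ ^ 2) ^ 2 * (c 0 ^ 2 + c 1 ^ 2 + c 2 ^ 2)) := by
      rw [Real.sqrt_mul (by positivity), Real.sqrt_sq (by positivity)]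
    rw [this]
    apply Real.sqrt_le_sqrt
    have e0 : (δ₂ * δ₃) ^ 2 ≤ (δ₁ ^ 2) ^ 2 :=
      pow_le_pow_left₀ (by positivity)
        (by nlinarith [mul_nonneg h3.le (sub_nonneg.2 h12),
          mul_nonneg h1.le (sub_nonneg.2 (h23.trans h12))]) 2
    have e1 : (δ₁ * δ₃) ^ 2 ≤ (δ₁ ^ 2) ^ 2 :=
      pow_le_pow_left₀ (by positivity) (by nlinarith [mul_nonneg h1.le (sub_nonneg.2 (h23.trans h12))]) 2
    have e2 : (δ₁ * δ₂) ^ 2 ≤ (δ₁ ^ 2) ^ 2 :=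
      pow_le_pow_left₀ (by positivity) (by nlinarith [mul_nonneg h1.le (sub_nonneg.2 h12)]) 2
    nlinarith [mul_le_mul_of_nonneg_right e0 (sq_nonneg (c 0)),
      mul_le_mul_of_nonneg_right e1 (sq_nonneg (c 1)),
      mul_le_mul_of_nonneg_right e2 (sq_nonneg (c 2))]
end

section
/- Let P be a 3×3 real invertible matrix with largest and smallest singular values δ₁ ≥ δ₃ > 0. For any twice-differentiable curves r, v : [0,∞) → ℝ³ with v(t) = P r(t) and with nonvanishing velocities, the curvatures κ_r(t) = ‖r'(t) × r''(t)‖/‖r'(t)‖³ and κ_v(t) = ‖v'(t) × v''(t)‖/‖v'(t)‖³ satisfy (δ₃²/δ₁³) κ_r(t) ≤ κ_v(t) ≤ (δ₁²/δ₃³) κ_r(t) for all t. -/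
open Matrix

/-- Curvature of a space curve from its first and second derivative. -/
noncomputable def curvature3 (r' r'' : Fin 3 → ℝ) : ℝ :=
  e3norm (crossProduct r' r'') / (e3norm r') ^ 3

lemma e3norm_nonneg (a : Fin 3 → ℝ) : 0 ≤ e3norm a := Real.sqrt_nonneg _

lemma e3norm_sq (a : Fin 3 → ℝ) : e3norm a ^ 2 = ∑ i, (a i) ^ 2 :=
  Real.sq_sqrt (by positivity)

lemma e3norm_pos {a : Fin 3 → ℝ} (h : a ≠ 0) : 0 < e3norm a := by
  rw [e3norm]
  apply Real.sqrt_pos.mpr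
  obtain ⟨i, hi⟩ : ∃ i, a i ≠ 0 := by
    by_contra hc
    push_neg at hc
    exact h (funext hc)
  apply Finset.sum_pos' (fun j _ => by positivity)
  exact ⟨i, Finset.mem_univ i, by positivity⟩

lemma e3norm_zero : e3norm 0 = 0 := by simp [e3norm]

lemma lagrange_sq (a b : Fin 3 → ℝ) :
    (∑ i, ((a ⨯₃ b) i) ^ 2) = (∑ i, (a i) ^ 2) * (∑ i, (b i) ^ 2) - (a ⬝ᵥ b) ^ 2 := by
  simp [cross_apply, Fin.sum_univ_three, dotProduct]
  ring

lemma cross_le (a b : Fin 3 → ℝ) : e3norm (a ⨯₃ b) ≤ e3norm a * e3norm b := by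
  rw [e3norm, e3norm, e3norm, ← Real.sqrt_mul (by positivity)]
  apply Real.sqrt_le_sqrt
  rw [lagrange_sq]
  nlinarith [sq_nonneg (a ⬝ᵥ b)]

lemma cross_ortho_eq {a b : Fin 3 → ℝ} (h : a ⬝ᵥ b = 0) :
    e3norm (a ⨯₃ b) = e3norm a * e3norm b := by
  rw [e3norm, e3norm, e3norm, ← Real.sqrt_mul (by positivity)]
  rw [lagrange_sq, h]
  ring_nf

lemma cross_map_le (Q : Matrix (Fin 3) (Fin 3) ℝ) (c : ℝ) (hc : 0 ≤ c)
    (hQ : ∀ x, e3norm (Q *ᵥ x) ≤ c * e3norm x) (a b : Fin 3 → ℝ) :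
    e3norm ((Q *ᵥ a) ⨯₃ (Q *ᵥ b)) ≤ c ^ 2 * e3norm (a ⨯₃ b) := by
  by_cases ha : a = 0
  · have : e3norm ((Q *ᵥ (0:Fin 3 → ℝ)) ⨯₃ (Q *ᵥ b)) = 0 := by
      simp [Matrix.mulVec_zero, map_zero, LinearMap.zero_apply, e3norm_zero]
    rw [ha, this]
    have := e3norm_nonneg ((0:Fin 3 → ℝ) ⨯₃ b)
    nlinarith
  · set k : ℝ := (a ⬝ᵥ b) / (a ⬝ᵥ a) with hk
    set b' : Fin 3 → ℝ := b - k • a with hb'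
    have haa : a ⬝ᵥ a ≠ 0 := fun hz => ha ((dotProduct_self_eq_zero).mp hz)
    have hab : a ⨯₃ b' = a ⨯₃ b := by
      rw [hb', map_sub, LinearMap.map_smul, cross_self, smul_zero, sub_zero]
    have hQab : (Q *ᵥ a) ⨯₃ (Q *ᵥ b') = (Q *ᵥ a) ⨯₃ (Q *ᵥ b) := by
      rw [hb', Matrix.mulVec_sub, Matrix.mulVec_smul, map_sub, LinearMap.map_smul, cross_self,
        smul_zero, sub_zero]
    have hdot : a ⬝ᵥ b' = 0 := by
      have hks : a ⬝ᵥ (k • a) = a ⬝ᵥ b := by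
        rw [dotProduct_smul, smul_eq_mul, hk, div_mul_cancel₀ _ haa]
      rw [hb', dotProduct_sub, hks, sub_self]
    calc e3norm ((Q *ᵥ a) ⨯₃ (Q *ᵥ b)) = e3norm ((Q *ᵥ a) ⨯₃ (Q *ᵥ b')) := by rw [hQab]
      _ ≤ e3norm (Q *ᵥ a) * e3norm (Q *ᵥ b') := cross_le _ _
      _ ≤ (c * e3norm a) * (c * e3norm b') := by
          exact mul_le_mul (hQ a) (hQ b') (e3norm_nonneg _) (mul_nonneg hc (e3norm_nonneg a))
      _ = c ^ 2 * (e3norm a * e3norm b') := by ring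
      _ = c ^ 2 * e3norm (a ⨯₃ b') := by rw [cross_ortho_eq hdot]
      _ = c ^ 2 * e3norm (a ⨯₃ b) := by rw [hab]

lemma deriv_unique_on_Ici {f g : ℝ → (Fin 3 → ℝ)} {f' g' : Fin 3 → ℝ} {t : ℝ} (ht : 0 ≤ t)
    (hf : HasDerivAt f f' t) (hg : HasDerivAt g g' t)
    (heq : ∀ s, 0 ≤ s → f s = g s) : f' = g' := by
  have h1 := hf.hasDerivWithinAt (s := Set.Ici (0:ℝ))
  have h2 := hg.hasDerivWithinAt (s := Set.Ici (0:ℝ))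
  have hu : UniqueDiffWithinAt ℝ (Set.Ici (0:ℝ)) t := (uniqueDiffOn_Ici 0) t ht
  rw [← h1.derivWithin hu, ← h2.derivWithin hu]
  exact derivWithin_congr (fun s hs => heq s hs) (heq t ht)

theorem curvature_bounds_of_equivalence
    (P : Matrix (Fin 3) (Fin 3) ℝ) (hP : IsUnit P.det)
    (δ₁ δ₃ : ℝ) (hδ : δ₁ ≥ δ₃) (h3 : 0 < δ₃)
    -- δ₁ and δ₃ are the largest and smallest singular values of P:
    (hup : ∀ x : Fin 3 → ℝ, e3norm (P *ᵥ x) ≤ δ₁ * e3norm x)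
    (hlo : ∀ x : Fin 3 → ℝ, δ₃ * e3norm x ≤ e3norm (P *ᵥ x))
    (r v r' r'' v' v'' : ℝ → (Fin 3 → ℝ))
    (hv : ∀ t, 0 ≤ t → v t = P *ᵥ r t)
    (hr1 : ∀ t, 0 ≤ t → HasDerivAt r (r' t) t)
    (hr2 : ∀ t, 0 ≤ t → HasDerivAt r' (r'' t) t)
    (hv1 : ∀ t, 0 ≤ t → HasDerivAt v (v' t) t)
    (hv2 : ∀ t, 0 ≤ t → HasDerivAt v' (v'' t) t)
    (hne : ∀ t, 0 ≤ t → r' t ≠ 0) (hne' : ∀ t, 0 ≤ t → v' t ≠ 0)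
    (t : ℝ) (ht : 0 ≤ t) :
    δ₃ ^ 2 / δ₁ ^ 3 * curvature3 (r' t) (r'' t) ≤ curvature3 (v' t) (v'' t) ∧
      curvature3 (v' t) (v'' t) ≤ δ₁ ^ 2 / δ₃ ^ 3 * curvature3 (r' t) (r'' t) := by
  have h1 : 0 < δ₁ := lt_of_lt_of_le h3 hδ
  -- derivative transfer
  have hLd : ∀ (u : ℝ → Fin 3 → ℝ) (u' : Fin 3 → ℝ) (s : ℝ), HasDerivAt u u' s →
      HasDerivAt (fun x => P *ᵥ u x) (P *ᵥ u') s := by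
    intro u u' s h
    have := (Matrix.mulVecLin P).toContinuousLinearMap.hasFDerivAt.comp_hasDerivAt s h
    exact this
  have key1 : ∀ s, 0 ≤ s → v' s = P *ᵥ r' s := fun s hs =>
    deriv_unique_on_Ici hs (hv1 s hs) (hLd r (r' s) s (hr1 s hs)) hv
  have key2 : v'' t = P *ᵥ r'' t :=
    deriv_unique_on_Ici ht (hv2 t ht) (hLd r' (r'' t) t (hr2 t ht)) key1
  -- inverse bound
  have hPinv : ∀ x, e3norm (P⁻¹ *ᵥ x) ≤ (1 / δ₃) * e3norm x := by
    intro x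
    have hx : P *ᵥ (P⁻¹ *ᵥ x) = x := by
      rw [Matrix.mulVec_mulVec, Matrix.mul_nonsing_inv P hP, Matrix.one_mulVec]
    have := hlo (P⁻¹ *ᵥ x)
    rw [hx] at this
    rw [div_mul_eq_mul_div, le_div_iff₀ h3, mul_comm]
    linarith [this]
  have hinvP : ∀ x : Fin 3 → ℝ, P⁻¹ *ᵥ (P *ᵥ x) = x := by
    intro x
    rw [Matrix.mulVec_mulVec, Matrix.nonsing_inv_mul P hP, Matrix.one_mulVec]
  set A := e3norm ((r' t) ⨯₃ (r'' t)) with hA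
  set B := e3norm ((v' t) ⨯₃ (v'' t)) with hB
  set nr := e3norm (r' t) with hnr
  set nv := e3norm (v' t) with hnv
  have hnrpos : 0 < nr := e3norm_pos (hne t ht)
  have hnvpos : 0 < nv := e3norm_pos (hne' t ht)
  have hAnn : 0 ≤ A := e3norm_nonneg _
  have hBnn : 0 ≤ B := e3norm_nonneg _
  have hBup : B ≤ δ₁ ^ 2 * A := by
    rw [hB, hA, key1 t ht, key2]
    exact cross_map_le P δ₁ h1.le hup _ _
  have hBlo : δ₃ ^ 2 * A ≤ B := by
    have hthis := cross_map_le P⁻¹ (1 / δ₃) (by positivity) hPinv (v' t) (v'' t)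
    have hv'inv : P⁻¹ *ᵥ v' t = r' t := by rw [key1 t ht, hinvP]
    have hv''inv : P⁻¹ *ᵥ v'' t = r'' t := by rw [key2, hinvP]
    rw [hv'inv, hv''inv] at hthis
    have h2 : δ₃ ^ 2 * ((1 / δ₃) ^ 2 * B) = B := by field_simp
    have h3' := mul_le_mul_of_nonneg_left hthis (by positivity : (0:ℝ) ≤ δ₃ ^ 2)
    rw [h2] at h3'
    exact h3'
  have hnvup : nv ≤ δ₁ * nr := by rw [hnv, hnr, key1 t ht]; exact hup _
  have hnvlo : δ₃ * nr ≤ nv := by rw [hnv, hnr, key1 t ht]; exact hlo _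
  have hcv : curvature3 (v' t) (v'' t) = B / nv ^ 3 := rfl
  have hcr : curvature3 (r' t) (r'' t) = A / nr ^ 3 := rfl
  rw [hcv, hcr]
  constructor
  · rw [div_mul_div_comm, ← mul_pow]
    apply div_le_div₀ hBnn hBlo (by positivity)
    exact pow_le_pow_left₀ hnvpos.le hnvup 3
  · rw [div_mul_div_comm, ← mul_pow]
    apply div_le_div₀ (mul_nonneg (by positivity) hAnn) hBup (by positivity)
    exact pow_le_pow_left₀ (by positivity) hnvlo 3
end

section
/- Consider the planar system ṙ = Ar with A the Jordan block [[λ, 1], [0, λ]], λ ≠ 0, and initial value with y₀ ≠ 0. Then κ²(t) = λ⁴y₀⁴ e^{4λt} / [((λx₀ + λy₀t + y₀)² + (λy₀)²)³ e^{6λt}]. Consequently, if λ < 0 then κ(t) → +∞ as t → +∞, and if λ > 0 then κ(t) → 0. -/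
open Real Filter

lemma hd_aux (a b l : ℝ) (t : ℝ) :
    HasDerivAt (fun t => (a + b * t) * Real.exp (l * t))
      (((a * l + b) + b * l * t) * Real.exp (l * t)) t := by
  have h1 : HasDerivAt (fun t : ℝ => a + b * t) b t := by
    simpa using ((hasDerivAt_id t).const_mul b).const_add a
  have h2 : HasDerivAt (fun t : ℝ => Real.exp (l * t)) (l * Real.exp (l * t)) t := by
    simpa [mul_comm, Function.comp_def] using (Real.hasDerivAt_exp (l * t)).comp t ((hasDerivAt_id t).const_mul l)
  have := h1.mul h2
  refine this.congr_deriv ?_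
  ring

lemma deriv_aux (a b l : ℝ) :
    deriv (fun t => (a + b * t) * Real.exp (l * t))
      = fun t => ((a * l + b) + b * l * t) * Real.exp (l * t) := by
  funext t
  exact (hd_aux a b l t).deriv

lemma sq_rpow_three_halves {u : ℝ} (hu : 0 ≤ u) : (u ^ 2 : ℝ) ^ ((3:ℝ)/2) = u ^ 3 := by
  rw [← Real.rpow_natCast u 2, ← Real.rpow_mul hu]
  norm_num

theorem curvature_planar_jordan_block
    (l x0 y0 : ℝ) (hl : l ≠ 0) (hy : y0 ≠ 0)
    (x y : ℝ → ℝ)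
    (hx : x = fun t => (x0 + y0 * t) * Real.exp (l * t))
    (hy' : y = fun t => y0 * Real.exp (l * t))
    (κ : ℝ → ℝ)
    (hκ : κ = fun t =>
      |deriv x t * deriv (deriv y) t - deriv (deriv x) t * deriv y t| /
        ((deriv x t) ^ 2 + (deriv y t) ^ 2) ^ ((3 : ℝ) / 2)) :
    (∀ t : ℝ,
        (κ t) ^ 2 =
          l ^ 4 * y0 ^ 4 * Real.exp (4 * l * t) /
            (((l * x0 + l * y0 * t + y0) ^ 2 + (l * y0) ^ 2) ^ 3 *
              Real.exp (6 * l * t))) ∧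
      (l < 0 → Tendsto κ atTop atTop) ∧
      (0 < l → Tendsto κ atTop (nhds 0)) := by
  -- derivatives
  have hdx : deriv x = fun t => ((x0 * l + y0) + y0 * l * t) * Real.exp (l * t) := by
    rw [hx]; exact deriv_aux x0 y0 l
  have hddx : ∀ t, deriv (deriv x) t
      = (((x0 * l + y0) * l + y0 * l) + y0 * l * l * t) * Real.exp (l * t) := by
    intro t
    rw [hdx, (hd_aux (x0 * l + y0) (y0 * l) l t).deriv]
  have ey : y = fun t => (y0 + 0 * t) * Real.exp (l * t) := by
    rw [hy']; funext t; ring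
  have hdy : deriv y = fun t => ((y0 * l + 0) + 0 * l * t) * Real.exp (l * t) := by
    rw [ey]; exact deriv_aux y0 0 l
  have hddy : ∀ t, deriv (deriv y) t
      = (((y0 * l + 0) * l + 0 * l) + 0 * l * l * t) * Real.exp (l * t) := by
    intro t
    rw [hdy, (hd_aux (y0 * l + 0) (0 * l) l t).deriv]
  have hQpos : ∀ t : ℝ, 0 < (l * x0 + l * y0 * t + y0) ^ 2 + (l * y0) ^ 2 := by
    intro t; positivity
  -- closed form for κ
  have hk : ∀ t, κ t = (l ^ 2 * y0 ^ 2) * Real.exp (-(l * t)) /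
      ((l * x0 + l * y0 * t + y0) ^ 2 + (l * y0) ^ 2) ^ ((3:ℝ)/2) := by
    intro t
    have hnum : deriv x t * deriv (deriv y) t - deriv (deriv x) t * deriv y t
        = -(l ^ 2 * y0 ^ 2) * (Real.exp (l * t) * Real.exp (l * t)) := by
      rw [hddx t, hddy t, hdx, hdy]; ring
    have habs : |deriv x t * deriv (deriv y) t - deriv (deriv x) t * deriv y t|
        = (l ^ 2 * y0 ^ 2) * (Real.exp (l * t)) ^ 2 := by
      rw [hnum, abs_mul, abs_neg, abs_of_nonneg (by positivity : (0:ℝ) ≤ l ^ 2 * y0 ^ 2),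
        abs_of_nonneg (by positivity : (0:ℝ) ≤ Real.exp (l * t) * Real.exp (l * t))]
      ring
    have hden : (deriv x t) ^ 2 + (deriv y t) ^ 2
        = (((l * x0 + l * y0 * t + y0) ^ 2 + (l * y0) ^ 2)) * (Real.exp (l * t)) ^ 2 := by
      rw [hdx, hdy]; ring
    rw [hκ]
    simp only [habs, hden]
    rw [Real.mul_rpow (hQpos t).le (by positivity),
      sq_rpow_three_halves (Real.exp_nonneg _), Real.exp_neg]
    have h1 : ((l * x0 + l * y0 * t + y0) ^ 2 + (l * y0) ^ 2) ^ ((3:ℝ)/2) ≠ 0 :=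
      ne_of_gt (Real.rpow_pos_of_pos (hQpos t) _)
    field_simp
  refine ⟨?_, ?_, ?_⟩
  · -- the κ² formula
    intro t
    have hQ32 : (((l * x0 + l * y0 * t + y0) ^ 2 + (l * y0) ^ 2) ^ ((3:ℝ)/2)) ^ 2
        = ((l * x0 + l * y0 * t + y0) ^ 2 + (l * y0) ^ 2) ^ 3 := by
      rw [← Real.rpow_natCast (((l * x0 + l * y0 * t + y0) ^ 2 + (l * y0) ^ 2) ^ ((3:ℝ)/2)) 2,
        ← Real.rpow_mul (hQpos t).le]
      norm_num
    rw [hk t, div_pow, hQ32,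
      div_eq_div_iff (by positivity) (by positivity)]
    have he : Real.exp (-(l * t)) ^ 2 * Real.exp (6 * l * t) = Real.exp (4 * l * t) := by
      rw [sq, ← Real.exp_add, ← Real.exp_add]
      ring_nf
    linear_combination
      ((l * x0 + l * y0 * t + y0) ^ 2 + (l * y0) ^ 2) ^ 3 * l ^ 4 * y0 ^ 4 * he
  · -- l < 0 : κ → ∞
    intro hneg
    set a : ℝ := l * x0 + y0 with ha
    set b : ℝ := l * y0 with hb
    have hbne : b ≠ 0 := mul_ne_zero hl hy
    set K : ℝ := 2 * a ^ 2 + 3 * b ^ 2 with hK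
    have hKpos : 0 < K := by positivity
    have hc : (0:ℝ) < l ^ 2 * y0 ^ 2 := by positivity
    -- auxiliary tendsto
    have hm : (0:ℝ) < -l := by linarith
    have h2 : Tendsto (fun t : ℝ => -l * (1 + t)) atTop atTop := by
      apply Tendsto.const_mul_atTop hm
      exact tendsto_atTop_add_const_left _ 1 tendsto_id
    have h3 := (tendsto_exp_div_pow_atTop 3).comp h2
    have h4 : Tendsto (fun t : ℝ => Real.exp (-l * t) / (1 + t) ^ 3) atTop atTop := by
      have h5 := h3.atTop_mul_const (r := (-l) ^ 3 / Real.exp (-l)) (by positivity)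
      apply h5.congr'
      filter_upwards [eventually_gt_atTop (-1 : ℝ)] with t ht
      have h1t : (0:ℝ) < 1 + t := by linarith
      have hexp : Real.exp (-l * (1 + t)) = Real.exp (-l) * Real.exp (-l * t) := by
        rw [← Real.exp_add]; ring_nf
      simp only [Function.comp]
      rw [hexp]
      field_simp
    have h6 : Tendsto (fun t : ℝ =>
        (l ^ 2 * y0 ^ 2 / K ^ ((3:ℝ)/2)) * (Real.exp (-l * t) / (1 + t) ^ 3)) atTop atTop := by
      apply Tendsto.const_mul_atTop _ h4
      positivity
    apply tendsto_atTop_mono' atTop _ h6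
    filter_upwards [eventually_ge_atTop (0 : ℝ)] with t ht
    have h1t : (0:ℝ) < 1 + t := by linarith
    have hQle : (l * x0 + l * y0 * t + y0) ^ 2 + (l * y0) ^ 2 ≤ K * (1 + t) ^ 2 := by
      have hrw : l * x0 + l * y0 * t + y0 = a + b * t := by rw [ha, hb]; ring
      rw [hrw, ← hb, hK]
      nlinarith [sq_nonneg (a - b), mul_nonneg ht (sq_nonneg (a - b)), sq_nonneg a,
        sq_nonneg b, mul_nonneg ht ht, mul_nonneg (mul_nonneg ht ht) (sq_nonneg b)]
    have hQ32le : ((l * x0 + l * y0 * t + y0) ^ 2 + (l * y0) ^ 2) ^ ((3:ℝ)/2)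
        ≤ K ^ ((3:ℝ)/2) * (1 + t) ^ 3 := by
      calc ((l * x0 + l * y0 * t + y0) ^ 2 + (l * y0) ^ 2) ^ ((3:ℝ)/2)
          ≤ (K * (1 + t) ^ 2) ^ ((3:ℝ)/2) :=
            Real.rpow_le_rpow (hQpos t).le hQle (by norm_num)
        _ = K ^ ((3:ℝ)/2) * (1 + t) ^ 3 := by
            rw [Real.mul_rpow hKpos.le (by positivity), sq_rpow_three_halves h1t.le]
    rw [hk t]
    have hexpeq : Real.exp (-(l * t)) = Real.exp (-l * t) := by ring_nf
    rw [hexpeq]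
    have hQ32pos : 0 < ((l * x0 + l * y0 * t + y0) ^ 2 + (l * y0) ^ 2) ^ ((3:ℝ)/2) :=
      Real.rpow_pos_of_pos (hQpos t) _
    calc (l ^ 2 * y0 ^ 2 / K ^ ((3:ℝ)/2)) * (Real.exp (-l * t) / (1 + t) ^ 3)
        = (l ^ 2 * y0 ^ 2) * Real.exp (-l * t) / (K ^ ((3:ℝ)/2) * (1 + t) ^ 3) := by
          rw [div_mul_div_comm]
      _ ≤ (l ^ 2 * y0 ^ 2) * Real.exp (-l * t) /
            ((l * x0 + l * y0 * t + y0) ^ 2 + (l * y0) ^ 2) ^ ((3:ℝ)/2) := by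
          gcongr
  · -- l > 0 : κ → 0
    intro hpos
    have hbne : l * y0 ≠ 0 := mul_ne_zero hl hy
    have hC : (0:ℝ) < ((l * y0) ^ 2) ^ ((3:ℝ)/2) := Real.rpow_pos_of_pos (by positivity) _
    have glim : Tendsto (fun t : ℝ =>
        (l ^ 2 * y0 ^ 2 / ((l * y0) ^ 2) ^ ((3:ℝ)/2)) * Real.exp (-(l * t))) atTop (nhds 0) := by
      have h1 : Tendsto (fun t : ℝ => -(l * t)) atTop atBot := by
        apply tendsto_neg_atTop_atBot.comp
        exact Tendsto.const_mul_atTop hpos tendsto_id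
      have h2 := Real.tendsto_exp_atBot.comp h1
      simpa using h2.const_mul (l ^ 2 * y0 ^ 2 / ((l * y0) ^ 2) ^ ((3:ℝ)/2))
    apply tendsto_of_tendsto_of_tendsto_of_le_of_le (tendsto_const_nhds) glim
    · intro t
      rw [hk t]
      positivity
    · intro t
      rw [hk t]
      have hQ32le : ((l * y0) ^ 2) ^ ((3:ℝ)/2)
          ≤ ((l * x0 + l * y0 * t + y0) ^ 2 + (l * y0) ^ 2) ^ ((3:ℝ)/2) :=
        Real.rpow_le_rpow (by positivity) (by nlinarith [sq_nonneg (l * x0 + l * y0 * t + y0)])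
          (by norm_num)
      calc (l ^ 2 * y0 ^ 2) * Real.exp (-(l * t)) /
            ((l * x0 + l * y0 * t + y0) ^ 2 + (l * y0) ^ 2) ^ ((3:ℝ)/2)
          ≤ (l ^ 2 * y0 ^ 2) * Real.exp (-(l * t)) / ((l * y0) ^ 2) ^ ((3:ℝ)/2) := by
            gcongr
        _ = (l ^ 2 * y0 ^ 2 / ((l * y0) ^ 2) ^ ((3:ℝ)/2)) * Real.exp (-(l * t)) := by
            ring
end

section
/- Let A be a 2×2 real matrix in real Jordan canonical form and suppose there exists an initial value r(0) ∈ ℝ² such that the curvature κ(t) of the trajectory r(t) = e^{tA}r(0) does not tend to 0 as t → +∞. Then the zero solution of ṙ = Ar is stable, i.e., all eigenvalues of A have nonpositive real part and eigenvalues with zero real part are semisimple. -/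
open Matrix Filter

noncomputable def e2norm (a : Fin 2 → ℝ) : ℝ := Real.sqrt (∑ i, (a i) ^ 2)

/-- Curvature of the trajectory `t ↦ e^{tA} r0` of the planar linear system `ṙ = Ar`. -/
noncomputable def curv2 (A : Matrix (Fin 2) (Fin 2) ℝ) (r0 : Fin 2 → ℝ) (t : ℝ) : ℝ :=
  let r := NormedSpace.exp (t • A) *ᵥ r0
  |(A *ᵥ r) 0 * ((A * A) *ᵥ r) 1 - ((A * A) *ᵥ r) 0 * (A *ᵥ r) 1| /
    (((A *ᵥ r) 0) ^ 2 + ((A *ᵥ r) 1) ^ 2) ^ ((3 : ℝ) / 2)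

/-! ### Matrix exponential formulas -/

lemma exp_diag2 (l1 l2 t : ℝ) :
    NormedSpace.exp (t • (Matrix.diagonal ![l1, l2])) =
      Matrix.diagonal ![Real.exp (t * l1), Real.exp (t * l2)] := by
  have h : t • (Matrix.diagonal ![l1, l2]) = Matrix.diagonal ![t * l1, t * l2] := by
    rw [← Matrix.diagonal_smul]
    congr 1
    ext i
    fin_cases i <;> simp
  rw [h, Matrix.exp_diagonal, Pi.exp_def]
  ext i j
  fin_cases i <;> fin_cases j <;>
    simp [Matrix.diagonal, ← Real.exp_eq_exp_ℝ]

lemma exp_of_sq_eq_zero {𝔸 : Type*} [NormedRing 𝔸] [NormedAlgebra ℝ 𝔸] [T2Space 𝔸]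
    (N : 𝔸) (hN : N * N = 0) : NormedSpace.exp N = 1 + N := by
  have hpow : ∀ n : ℕ, 2 ≤ n → N ^ n = 0 := by
    intro n hn
    obtain ⟨m, rfl⟩ := Nat.exists_eq_add_of_le hn
    rw [pow_add, pow_two, hN, zero_mul]
  simp only [NormedSpace.exp_eq_tsum ℝ]
  have h2 : ∑' n : ℕ, ((Nat.factorial n : ℝ)⁻¹) • N ^ n
      = ∑ n ∈ ({0, 1} : Finset ℕ), ((Nat.factorial n : ℝ)⁻¹) • N ^ n := by
    refine tsum_eq_sum ?_
    intro n hn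
    have hh : 2 ≤ n := by
      rcases n with _ | _ | n
      · simp at hn
      · simp at hn
      · omega
    rw [hpow n hh, smul_zero]
  rw [h2]
  simp [Finset.sum_pair]

lemma matrix_exp_sq_zero (N : Matrix (Fin 2) (Fin 2) ℝ) (hN : N * N = 0) :
    NormedSpace.exp N = 1 + N := by
  letI : SeminormedRing (Matrix (Fin 2) (Fin 2) ℝ) := Matrix.linftyOpSemiNormedRing
  letI : NormedRing (Matrix (Fin 2) (Fin 2) ℝ) := Matrix.linftyOpNormedRing
  letI : NormedAlgebra ℝ (Matrix (Fin 2) (Fin 2) ℝ) := Matrix.linftyOpNormedAlgebra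
  exact exp_of_sq_eq_zero N hN

lemma exp_jordan (l t : ℝ) :
    NormedSpace.exp (t • (!![l, 1; 0, l] : Matrix (Fin 2) (Fin 2) ℝ)) =
      !![Real.exp (t * l), t * Real.exp (t * l); 0, Real.exp (t * l)] := by
  have hsplit : t • (!![l, 1; 0, l] : Matrix (Fin 2) (Fin 2) ℝ) =
      Matrix.diagonal ![t * l, t * l] + !![0, t; 0, 0] := by
    ext i j
    fin_cases i <;> fin_cases j <;> simp [Matrix.diagonal]
  have hcomm : Commute (Matrix.diagonal ![t * l, t * l]) (!![0, t; 0, 0] : Matrix (Fin 2) (Fin 2) ℝ) := by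
    unfold Commute SemiconjBy
    ext i j
    fin_cases i <;> fin_cases j <;>
      simp [Matrix.mul_apply, Fin.sum_univ_two, Matrix.diagonal] <;> ring
  have hsq : (!![0, t; 0, 0] : Matrix (Fin 2) (Fin 2) ℝ) * !![0, t; 0, 0] = 0 := by
    ext i j
    fin_cases i <;> fin_cases j <;> simp [Matrix.mul_apply, Fin.sum_univ_two]
  rw [hsplit, Matrix.exp_add_of_commute _ _ hcomm, matrix_exp_sq_zero _ hsq]
  have hd := exp_diag2 l l t
  have heq : t • (Matrix.diagonal ![l, l]) = Matrix.diagonal ![t * l, t * l] := by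
    ext i j
    fin_cases i <;> fin_cases j <;> simp [Matrix.diagonal]
  rw [heq] at hd
  rw [hd]
  ext i j
  fin_cases i <;> fin_cases j <;>
    simp [Matrix.mul_apply, Fin.sum_univ_two, Matrix.diagonal, mul_comm]

def cplxMat : ℂ →+* Matrix (Fin 2) (Fin 2) ℝ where
  toFun z := !![z.re, z.im; -z.im, z.re]
  map_one' := by ext i j; fin_cases i <;> fin_cases j <;> simp
  map_mul' z w := by
    ext i j
    fin_cases i <;> fin_cases j <;>
      simp [Matrix.mul_apply, Fin.sum_univ_two, Complex.mul_re, Complex.mul_im] <;> ring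
  map_zero' := by ext i j; fin_cases i <;> fin_cases j <;> simp
  map_add' z w := by
    ext i j
    fin_cases i <;> fin_cases j <;> simp [Complex.add_re, Complex.add_im] <;> ring

lemma cplxMat_continuous : Continuous cplxMat := by
  apply continuous_matrix
  intro i j
  fin_cases i <;> fin_cases j <;> simp [cplxMat] <;>
    first
      | exact Complex.continuous_re
      | exact Complex.continuous_im
      | exact Complex.continuous_im.neg
      | exact Complex.continuous_re.neg

lemma exp_rot (a b t : ℝ) :
    NormedSpace.exp (t • (!![a, b; -b, a] : Matrix (Fin 2) (Fin 2) ℝ)) =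
      !![Real.exp (t * a) * Real.cos (t * b), Real.exp (t * a) * Real.sin (t * b);
         -(Real.exp (t * a) * Real.sin (t * b)), Real.exp (t * a) * Real.cos (t * b)] := by
  have h1 : t • (!![a, b; -b, a] : Matrix (Fin 2) (Fin 2) ℝ) = cplxMat (t * (a + b * Complex.I)) := by
    ext i j
    fin_cases i <;> fin_cases j <;>
      simp [cplxMat, Complex.mul_re, Complex.mul_im, Complex.add_re, Complex.add_im]
  have hmap : NormedSpace.exp (cplxMat (t * (a + b * Complex.I))) =
      cplxMat (NormedSpace.exp ((t : ℂ) * (a + b * Complex.I))) := by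
    letI : SeminormedRing (Matrix (Fin 2) (Fin 2) ℝ) := Matrix.linftyOpSemiNormedRing
    letI : NormedRing (Matrix (Fin 2) (Fin 2) ℝ) := Matrix.linftyOpNormedRing
    letI : NormedAlgebra ℝ (Matrix (Fin 2) (Fin 2) ℝ) := Matrix.linftyOpNormedAlgebra
    exact (NormedSpace.map_exp cplxMat cplxMat_continuous _).symm
  rw [h1, hmap]
  have h2 : NormedSpace.exp ((t : ℂ) * (a + b * Complex.I)) = Complex.exp (t * (a + b * Complex.I)) := by
    rw [Complex.exp_eq_exp_ℂ]
  rw [h2]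
  ext i j
  have hre : (Complex.exp (t * (a + b * Complex.I))).re = Real.exp (t * a) * Real.cos (t * b) := by
    rw [Complex.exp_re]
    congr 2 <;> simp [Complex.mul_re, Complex.mul_im, Complex.add_re, Complex.add_im]
  have him : (Complex.exp (t * (a + b * Complex.I))).im = Real.exp (t * a) * Real.sin (t * b) := by
    rw [Complex.exp_im]
    congr 2 <;> simp [Complex.mul_re, Complex.mul_im, Complex.add_re, Complex.add_im]
  fin_cases i <;> fin_cases j <;> simp [cplxMat, hre, him]

/-! ### Curvature formulas -/

lemma curv2_nonneg (A : Matrix (Fin 2) (Fin 2) ℝ) (r0 : Fin 2 → ℝ) (t : ℝ) :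
    0 ≤ curv2 A r0 t := by
  unfold curv2
  exact div_nonneg (abs_nonneg _) (Real.rpow_nonneg (by positivity) _)

lemma curv2_diag (l1 l2 : ℝ) (r0 : Fin 2 → ℝ) (t : ℝ) :
    curv2 (Matrix.diagonal ![l1, l2]) r0 t =
      |l1 * l2 * (l2 - l1) * r0 0 * r0 1| * (Real.exp (t * l1) * Real.exp (t * l2)) /
      ((l1 * r0 0) ^ 2 * Real.exp (t * l1) ^ 2 + (l2 * r0 1) ^ 2 * Real.exp (t * l2) ^ 2)
        ^ ((3 : ℝ) / 2) := by
  unfold curv2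
  rw [exp_diag2]
  simp only [Matrix.mulVec_diagonal, Matrix.mulVec, dotProduct, Fin.sum_univ_two,
    Matrix.mul_apply, Matrix.diagonal_apply, Matrix.cons_val_zero, Matrix.cons_val_one,
    Matrix.head_cons]
  simp
  congr 1
  · rw [← abs_mul, ← abs_mul, ← abs_mul, ← abs_mul]
    rw [show |l1 * l2 * (l2 - l1) * r0 0 * r0 1| * (Real.exp (t * l1) * Real.exp (t * l2)) =
        |l1 * l2 * (l2 - l1) * r0 0 * r0 1 * (Real.exp (t * l1) * Real.exp (t * l2))| by
      rw [abs_mul (l1 * l2 * (l2 - l1) * r0 0 * r0 1),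
        abs_of_pos (by positivity : (0:ℝ) < Real.exp (t * l1) * Real.exp (t * l2))]]
    congr 1
    ring
  · congr 1
    ring

lemma curv2_rot (a b : ℝ) (r0 : Fin 2 → ℝ) (t : ℝ) :
    curv2 (!![a, b; -b, a]) r0 t =
      |b * (a ^ 2 + b ^ 2) * (r0 0 ^ 2 + r0 1 ^ 2)| * (Real.exp (t * a) * Real.exp (t * a)) /
      ((a ^ 2 + b ^ 2) * (r0 0 ^ 2 + r0 1 ^ 2) * (Real.exp (t * a) * Real.exp (t * a)))
        ^ ((3 : ℝ) / 2) := by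
  have hcs : Real.cos (t * b) ^ 2 + Real.sin (t * b) ^ 2 = 1 := Real.cos_sq_add_sin_sq _
  unfold curv2
  rw [exp_rot]
  simp only [Matrix.mulVec, dotProduct, Fin.sum_univ_two, Matrix.mul_apply,
    Matrix.cons_val_zero, Matrix.cons_val_one, Matrix.head_cons]
  simp
  congr 1
  · rw [← abs_mul, ← abs_mul]
    rw [show |b * (a ^ 2 + b ^ 2) * (r0 0 ^ 2 + r0 1 ^ 2)| *
          (Real.exp (t * a) * Real.exp (t * a)) =
        |(-(b * (a ^ 2 + b ^ 2) * (r0 0 ^ 2 + r0 1 ^ 2))) *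
          (Real.exp (t * a) * Real.exp (t * a))| by
      rw [abs_mul (-(b * (a ^ 2 + b ^ 2) * (r0 0 ^ 2 + r0 1 ^ 2)))
          (Real.exp (t * a) * Real.exp (t * a)), abs_neg, abs_mul,
        abs_of_pos (by positivity : (0:ℝ) < Real.exp (t * a) * Real.exp (t * a))]]
    congr 1
    linear_combination (-(b * (a ^ 2 + b ^ 2)) * Real.exp (t * a) ^ 2 *
      (r0 0 ^ 2 + r0 1 ^ 2)) * hcs
  · congr 1
    linear_combination ((a ^ 2 + b ^ 2) * Real.exp (t * a) ^ 2 * (r0 0 ^ 2 + r0 1 ^ 2)) * hcs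

lemma curv2_jordan (l : ℝ) (r0 : Fin 2 → ℝ) (t : ℝ) :
    curv2 (!![l, 1; 0, l]) r0 t =
      l ^ 2 * r0 1 ^ 2 * (Real.exp (t * l) * Real.exp (t * l)) /
      ((l * (Real.exp (t * l) * r0 0 + t * Real.exp (t * l) * r0 1) + Real.exp (t * l) * r0 1) ^ 2
        + (l * (Real.exp (t * l) * r0 1)) ^ 2) ^ ((3 : ℝ) / 2) := by
  unfold curv2
  rw [exp_jordan]
  simp only [Matrix.mulVec, dotProduct, Fin.sum_univ_two, Matrix.mul_apply,
    Matrix.cons_val_zero, Matrix.cons_val_one, Matrix.head_cons]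
  simp
  congr 1
  · rw [show l ^ 2 * r0 1 ^ 2 * (Real.exp (t * l) * Real.exp (t * l)) =
        |(-(l ^ 2 * r0 1 ^ 2 * (Real.exp (t * l) * Real.exp (t * l))))| by
      rw [abs_neg, abs_of_nonneg (by positivity)]]
    congr 1
    ring

/-! ### Limit helpers -/

lemma tendsto_of_exp_bound (f : ℝ → ℝ) (C c : ℝ) (hc : c < 0)
    (h0 : ∀ t, 0 ≤ f t) (hb : ∀ t, f t ≤ C * Real.exp (t * c)) :
    Tendsto f atTop (nhds 0) := by
  have h1 : Tendsto (fun t : ℝ => t * c) atTop atBot := tendsto_id.atTop_mul_const_of_neg hc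
  have h2 := (Real.tendsto_exp_atBot.comp h1).const_mul C
  simp only [mul_zero] at h2
  exact squeeze_zero h0 hb h2

lemma exp_div_aux (c K p q : ℝ) (hK : K ≠ 0) :
    c * Real.exp p / (K * Real.exp q) = (c / K) * Real.exp (p - q) := by
  rw [Real.exp_sub]
  field_simp


lemma rpow_mul_exp (K u : ℝ) (hK : 0 ≤ K) :
    (K * Real.exp u) ^ ((3 : ℝ) / 2) = K ^ ((3 : ℝ) / 2) * Real.exp (u * (3 / 2)) := by
  rw [Real.mul_rpow hK (Real.exp_nonneg _), ← Real.exp_mul]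


/-! ### Tendsto lemmas for unstable cases -/

lemma tendsto_curv2_diag (l1 l2 : ℝ) (h : 0 < l1 ∨ 0 < l2) (r0 : Fin 2 → ℝ) :
    Tendsto (curv2 (Matrix.diagonal ![l1, l2]) r0) atTop (nhds 0) := by
  by_cases hc : l1 * l2 * (l2 - l1) * r0 0 * r0 1 = 0
  · have hz : curv2 (Matrix.diagonal ![l1, l2]) r0 = fun _ => 0 := by
      funext t; rw [curv2_diag, hc]; simp
    rw [hz]; exact tendsto_const_nhds
  · have hl1 : l1 ≠ 0 := fun h0 => hc (by rw [h0]; ring)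
    have hl2 : l2 ≠ 0 := fun h0 => hc (by rw [h0]; ring)
    have hx : r0 0 ≠ 0 := fun h0 => hc (by rw [h0]; ring)
    have hy : r0 1 ≠ 0 := fun h0 => hc (by rw [h0]; ring)
    rcases le_total l2 l1 with hle | hle
    · have hl1pos : 0 < l1 := h.elim id fun h2 => lt_of_lt_of_le h2 hle
      have hKpos : (0:ℝ) < ((l1 * r0 0) ^ 2) ^ ((3:ℝ)/2) :=
        Real.rpow_pos_of_pos (by positivity) _
      apply tendsto_of_exp_bound _
        (|l1 * l2 * (l2 - l1) * r0 0 * r0 1| / ((l1 * r0 0) ^ 2) ^ ((3:ℝ)/2))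
        (l2 - 2 * l1) (by linarith) (curv2_nonneg _ _)
      intro t
      have hd2 : (0:ℝ) < ((l1 * r0 0) ^ 2 * Real.exp (t * l1) ^ 2) ^ ((3:ℝ)/2) :=
        Real.rpow_pos_of_pos (by positivity) _
      have hd1 : ((l1 * r0 0) ^ 2 * Real.exp (t * l1) ^ 2) ^ ((3:ℝ)/2)
          ≤ ((l1 * r0 0) ^ 2 * Real.exp (t * l1) ^ 2
              + (l2 * r0 1) ^ 2 * Real.exp (t * l2) ^ 2) ^ ((3:ℝ)/2) :=
        Real.rpow_le_rpow (by positivity) (by nlinarith [sq_nonneg (l2 * r0 1 * Real.exp (t * l2))])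
          (by norm_num)
      have step1 := div_le_div_of_nonneg_left (abs_nonneg
        (l1 * l2 * (l2 - l1) * r0 0 * r0 1 * (Real.exp (t * l1) * Real.exp (t * l2)))) hd2 hd1
      have key : |l1 * l2 * (l2 - l1) * r0 0 * r0 1| * (Real.exp (t * l1) * Real.exp (t * l2)) /
          ((l1 * r0 0) ^ 2 * Real.exp (t * l1) ^ 2) ^ ((3:ℝ)/2)
          = (|l1 * l2 * (l2 - l1) * r0 0 * r0 1| / ((l1 * r0 0) ^ 2) ^ ((3:ℝ)/2))
            * Real.exp (t * (l2 - 2 * l1)) := by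
        rw [show Real.exp (t * l1) ^ 2 = Real.exp (t * l1 + t * l1) by rw [Real.exp_add]; ring,
          rpow_mul_exp _ _ (by positivity),
          show Real.exp (t * l1) * Real.exp (t * l2) = Real.exp (t * l1 + t * l2) from
            (Real.exp_add _ _).symm,
          exp_div_aux _ _ _ _ (ne_of_gt hKpos)]
        congr 1
        ring
      calc curv2 (Matrix.diagonal ![l1, l2]) r0 t
          = |l1 * l2 * (l2 - l1) * r0 0 * r0 1| * (Real.exp (t * l1) * Real.exp (t * l2)) /
            ((l1 * r0 0) ^ 2 * Real.exp (t * l1) ^ 2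
              + (l2 * r0 1) ^ 2 * Real.exp (t * l2) ^ 2) ^ ((3:ℝ)/2) := curv2_diag _ _ _ _
        _ ≤ |l1 * l2 * (l2 - l1) * r0 0 * r0 1| * (Real.exp (t * l1) * Real.exp (t * l2)) /
            ((l1 * r0 0) ^ 2 * Real.exp (t * l1) ^ 2) ^ ((3:ℝ)/2) := by
            apply div_le_div_of_nonneg_left (by positivity) hd2 hd1
        _ = _ := key
    · have hl2pos : 0 < l2 := h.elim (fun h1 => lt_of_lt_of_le h1 hle) id
      have hKpos : (0:ℝ) < ((l2 * r0 1) ^ 2) ^ ((3:ℝ)/2) :=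
        Real.rpow_pos_of_pos (by positivity) _
      apply tendsto_of_exp_bound _
        (|l1 * l2 * (l2 - l1) * r0 0 * r0 1| / ((l2 * r0 1) ^ 2) ^ ((3:ℝ)/2))
        (l1 - 2 * l2) (by linarith) (curv2_nonneg _ _)
      intro t
      have hd2 : (0:ℝ) < ((l2 * r0 1) ^ 2 * Real.exp (t * l2) ^ 2) ^ ((3:ℝ)/2) :=
        Real.rpow_pos_of_pos (by positivity) _
      have hd1 : ((l2 * r0 1) ^ 2 * Real.exp (t * l2) ^ 2) ^ ((3:ℝ)/2)
          ≤ ((l1 * r0 0) ^ 2 * Real.exp (t * l1) ^ 2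
              + (l2 * r0 1) ^ 2 * Real.exp (t * l2) ^ 2) ^ ((3:ℝ)/2) :=
        Real.rpow_le_rpow (by positivity) (by nlinarith [sq_nonneg (l1 * r0 0 * Real.exp (t * l1))])
          (by norm_num)
      have key : |l1 * l2 * (l2 - l1) * r0 0 * r0 1| * (Real.exp (t * l1) * Real.exp (t * l2)) /
          ((l2 * r0 1) ^ 2 * Real.exp (t * l2) ^ 2) ^ ((3:ℝ)/2)
          = (|l1 * l2 * (l2 - l1) * r0 0 * r0 1| / ((l2 * r0 1) ^ 2) ^ ((3:ℝ)/2))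
            * Real.exp (t * (l1 - 2 * l2)) := by
        rw [show Real.exp (t * l2) ^ 2 = Real.exp (t * l2 + t * l2) by rw [Real.exp_add]; ring,
          rpow_mul_exp _ _ (by positivity),
          show Real.exp (t * l1) * Real.exp (t * l2) = Real.exp (t * l1 + t * l2) from
            (Real.exp_add _ _).symm,
          exp_div_aux _ _ _ _ (ne_of_gt hKpos)]
        congr 1
        ring
      calc curv2 (Matrix.diagonal ![l1, l2]) r0 t
          = |l1 * l2 * (l2 - l1) * r0 0 * r0 1| * (Real.exp (t * l1) * Real.exp (t * l2)) /
            ((l1 * r0 0) ^ 2 * Real.exp (t * l1) ^ 2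
              + (l2 * r0 1) ^ 2 * Real.exp (t * l2) ^ 2) ^ ((3:ℝ)/2) := curv2_diag _ _ _ _
        _ ≤ |l1 * l2 * (l2 - l1) * r0 0 * r0 1| * (Real.exp (t * l1) * Real.exp (t * l2)) /
            ((l2 * r0 1) ^ 2 * Real.exp (t * l2) ^ 2) ^ ((3:ℝ)/2) := by
            apply div_le_div_of_nonneg_left (by positivity) hd2 hd1
        _ = _ := key

lemma tendsto_curv2_rot (a b : ℝ) (ha : 0 < a) (r0 : Fin 2 → ℝ) :
    Tendsto (curv2 (!![a, b; -b, a]) r0) atTop (nhds 0) := by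
  by_cases hs : r0 0 ^ 2 + r0 1 ^ 2 = 0
  · have hz : curv2 (!![a, b; -b, a]) r0 = fun _ => 0 := by
      funext t; rw [curv2_rot, hs]; simp
    rw [hz]; exact tendsto_const_nhds
  · have hspos : 0 < r0 0 ^ 2 + r0 1 ^ 2 := lt_of_le_of_ne (by positivity) (Ne.symm hs)
    have hKpos : (0:ℝ) < ((a ^ 2 + b ^ 2) * (r0 0 ^ 2 + r0 1 ^ 2)) ^ ((3:ℝ)/2) :=
      Real.rpow_pos_of_pos (by positivity) _
    apply tendsto_of_exp_bound _
      (|b * (a ^ 2 + b ^ 2) * (r0 0 ^ 2 + r0 1 ^ 2)| /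
        ((a ^ 2 + b ^ 2) * (r0 0 ^ 2 + r0 1 ^ 2)) ^ ((3:ℝ)/2)) (-a) (by linarith)
      (curv2_nonneg _ _)
    intro t
    rw [curv2_rot]
    apply le_of_eq
    rw [show Real.exp (t * a) * Real.exp (t * a) = Real.exp (t * a + t * a) from
        (Real.exp_add _ _).symm,
      rpow_mul_exp _ _ (by positivity),
      exp_div_aux _ _ _ _ (ne_of_gt hKpos)]
    congr 1
    ring

lemma tendsto_curv2_jordan (l : ℝ) (hl : 0 ≤ l) (r0 : Fin 2 → ℝ) :
    Tendsto (curv2 (!![l, 1; 0, l]) r0) atTop (nhds 0) := by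
  by_cases hc : l ^ 2 * r0 1 ^ 2 = 0
  · have hz : curv2 (!![l, 1; 0, l]) r0 = fun _ => 0 := by
      funext t; rw [curv2_jordan, hc]; simp
    rw [hz]; exact tendsto_const_nhds
  · have hlpos : 0 < l := by
      rcases mul_ne_zero_iff.mp hc with ⟨h1, _⟩
      have : l ≠ 0 := fun h0 => h1 (by rw [h0]; ring)
      exact lt_of_le_of_ne hl (Ne.symm this)
    have hy : r0 1 ≠ 0 := by
      rcases mul_ne_zero_iff.mp hc with ⟨_, h2⟩
      exact fun h0 => h2 (by rw [h0]; ring)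
    have hKpos0 : (0:ℝ) < l ^ 2 * r0 1 ^ 2 := by positivity
    have hKpos : (0:ℝ) < (l ^ 2 * r0 1 ^ 2) ^ ((3:ℝ)/2) :=
      Real.rpow_pos_of_pos hKpos0 _
    apply tendsto_of_exp_bound _
      ((l ^ 2 * r0 1 ^ 2) / (l ^ 2 * r0 1 ^ 2) ^ ((3:ℝ)/2)) (-l) (by linarith)
      (curv2_nonneg _ _)
    intro t
    have hd2 : (0:ℝ) < (l ^ 2 * r0 1 ^ 2 * (Real.exp (t * l) * Real.exp (t * l))) ^ ((3:ℝ)/2) :=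
      Real.rpow_pos_of_pos (by positivity) _
    have hd1 : (l ^ 2 * r0 1 ^ 2 * (Real.exp (t * l) * Real.exp (t * l))) ^ ((3:ℝ)/2)
        ≤ ((l * (Real.exp (t * l) * r0 0 + t * Real.exp (t * l) * r0 1)
            + Real.exp (t * l) * r0 1) ^ 2
          + (l * (Real.exp (t * l) * r0 1)) ^ 2) ^ ((3:ℝ)/2) := by
      apply Real.rpow_le_rpow (by positivity) ?_ (by norm_num)
      nlinarith [sq_nonneg (l * (Real.exp (t * l) * r0 0 + t * Real.exp (t * l) * r0 1)
        + Real.exp (t * l) * r0 1)]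
    have key : l ^ 2 * r0 1 ^ 2 * (Real.exp (t * l) * Real.exp (t * l)) /
        (l ^ 2 * r0 1 ^ 2 * (Real.exp (t * l) * Real.exp (t * l))) ^ ((3:ℝ)/2)
        = ((l ^ 2 * r0 1 ^ 2) / (l ^ 2 * r0 1 ^ 2) ^ ((3:ℝ)/2)) * Real.exp (t * (-l)) := by
      rw [show Real.exp (t * l) * Real.exp (t * l) = Real.exp (t * l + t * l) from
          (Real.exp_add _ _).symm,
        rpow_mul_exp _ _ (le_of_lt hKpos0),
        exp_div_aux _ _ _ _ (ne_of_gt hKpos)]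
      congr 1
      ring
    calc curv2 (!![l, 1; 0, l]) r0 t
        = l ^ 2 * r0 1 ^ 2 * (Real.exp (t * l) * Real.exp (t * l)) /
          ((l * (Real.exp (t * l) * r0 0 + t * Real.exp (t * l) * r0 1)
              + Real.exp (t * l) * r0 1) ^ 2
            + (l * (Real.exp (t * l) * r0 1)) ^ 2) ^ ((3:ℝ)/2) := curv2_jordan _ _ _
      _ ≤ l ^ 2 * r0 1 ^ 2 * (Real.exp (t * l) * Real.exp (t * l)) /
          (l ^ 2 * r0 1 ^ 2 * (Real.exp (t * l) * Real.exp (t * l))) ^ ((3:ℝ)/2) := by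
          apply div_le_div_of_nonneg_left (by positivity) hd2 hd1
      _ = _ := key

lemma jordan_growth {l : ℝ} (hl : l < 0) {t : ℝ} (ht : 0 ≤ t) :
    (1 + t) * Real.exp (t * l) ≤ (1 - l) / (-l) := by
  rw [le_div_iff₀ (by linarith : (0:ℝ) < -l)]
  have hE1 : Real.exp (t * l) ≤ 1 := Real.exp_le_one_iff.mpr (by nlinarith)
  have hE0 : (0:ℝ) < Real.exp (t * l) := Real.exp_pos _
  have hA : 1 + t * (-l) ≤ Real.exp (t * (-l)) := by
    have := Real.add_one_le_exp (t * (-l)); linarith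
  have hprod : Real.exp (t * l) * Real.exp (t * (-l)) = 1 := by
    rw [← Real.exp_add, show t * l + t * (-l) = 0 by ring, Real.exp_zero]
  nlinarith [mul_le_mul_of_nonneg_left hA hE0.le,
    mul_nonneg (by linarith : (0:ℝ) ≤ -l) (by linarith : 0 ≤ 1 - Real.exp (t * l))]

/-! ### Main theorem -/

set_option maxHeartbeats 1000000 in
theorem stable_of_curvature_not_tendsto_zero_2d
    (A : Matrix (Fin 2) (Fin 2) ℝ)
    (hJordan : (∃ l1 l2 : ℝ, A = Matrix.diagonal ![l1, l2]) ∨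
      (∃ a b : ℝ, 0 < b ∧ A = !![a, b; -b, a]) ∨
      (∃ l : ℝ, A = !![l, 1; 0, l]))
    (hcurv : ∃ r0 : Fin 2 → ℝ, ¬ Tendsto (curv2 A r0) atTop (nhds 0)) :
    ∀ ε > 0, ∃ δ > 0, ∀ r0 : Fin 2 → ℝ, e2norm r0 < δ →
      ∀ t : ℝ, 0 ≤ t → e2norm (NormedSpace.exp (t • A) *ᵥ r0) < ε := by
  intro ε hε
  rcases hJordan with ⟨l1, l2, rfl⟩ | ⟨a, b, hb, rfl⟩ | ⟨l, rfl⟩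
  · -- diagonal case
    by_cases hst : l1 ≤ 0 ∧ l2 ≤ 0
    · refine ⟨ε, hε, fun r0 hr0 t ht => ?_⟩
      rw [exp_diag2]
      have h0 : (Matrix.diagonal ![Real.exp (t * l1), Real.exp (t * l2)] *ᵥ r0) 0
          = Real.exp (t * l1) * r0 0 := by simp [Matrix.mulVec_diagonal]
      have h1 : (Matrix.diagonal ![Real.exp (t * l1), Real.exp (t * l2)] *ᵥ r0) 1
          = Real.exp (t * l2) * r0 1 := by simp [Matrix.mulVec_diagonal]
      unfold e2norm at hr0 ⊢
      simp only [Fin.sum_univ_two] at hr0 ⊢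
      rw [h0, h1]
      refine lt_of_le_of_lt (Real.sqrt_le_sqrt ?_) hr0
      have he1 : Real.exp (t * l1) ≤ 1 := Real.exp_le_one_iff.mpr (by nlinarith [hst.1])
      have he2 : Real.exp (t * l2) ≤ 1 := Real.exp_le_one_iff.mpr (by nlinarith [hst.2])
      have hp1 : (0:ℝ) ≤ Real.exp (t * l1) := (Real.exp_pos _).le
      have hp2 : (0:ℝ) ≤ Real.exp (t * l2) := (Real.exp_pos _).le
      have hq1 : Real.exp (t * l1) ^ 2 ≤ 1 := by nlinarith
      have hq2 : Real.exp (t * l2) ^ 2 ≤ 1 := by nlinarith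
      nlinarith [mul_le_mul_of_nonneg_right hq1 (sq_nonneg (r0 0)),
        mul_le_mul_of_nonneg_right hq2 (sq_nonneg (r0 1))]
    · obtain ⟨r0, hr0⟩ := hcurv
      have hpos : 0 < l1 ∨ 0 < l2 := by
        rcases not_and_or.mp hst with h | h
        · exact Or.inl (lt_of_not_ge h)
        · exact Or.inr (lt_of_not_ge h)
      exact absurd (tendsto_curv2_diag l1 l2 hpos r0) hr0
  · -- rotation case
    by_cases hst : a ≤ 0
    · refine ⟨ε, hε, fun r0 hr0 t ht => ?_⟩
      rw [exp_rot]
      have h0 : (!![Real.exp (t * a) * Real.cos (t * b), Real.exp (t * a) * Real.sin (t * b);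
          -(Real.exp (t * a) * Real.sin (t * b)), Real.exp (t * a) * Real.cos (t * b)] *ᵥ r0) 0
          = Real.exp (t * a) * Real.cos (t * b) * r0 0
            + Real.exp (t * a) * Real.sin (t * b) * r0 1 := by
        simp [Matrix.mulVec, dotProduct, Fin.sum_univ_two]
      have h1 : (!![Real.exp (t * a) * Real.cos (t * b), Real.exp (t * a) * Real.sin (t * b);
          -(Real.exp (t * a) * Real.sin (t * b)), Real.exp (t * a) * Real.cos (t * b)] *ᵥ r0) 1
          = -(Real.exp (t * a) * Real.sin (t * b)) * r0 0
            + Real.exp (t * a) * Real.cos (t * b) * r0 1 := by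
        simp [Matrix.mulVec, dotProduct, Fin.sum_univ_two]
      unfold e2norm at hr0 ⊢
      simp only [Fin.sum_univ_two] at hr0 ⊢
      rw [h0, h1]
      refine lt_of_le_of_lt (Real.sqrt_le_sqrt ?_) hr0
      have hcs : Real.cos (t * b) ^ 2 + Real.sin (t * b) ^ 2 = 1 := Real.cos_sq_add_sin_sq _
      have heq : (Real.exp (t * a) * Real.cos (t * b) * r0 0
            + Real.exp (t * a) * Real.sin (t * b) * r0 1) ^ 2
          + (-(Real.exp (t * a) * Real.sin (t * b)) * r0 0
            + Real.exp (t * a) * Real.cos (t * b) * r0 1) ^ 2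
          = Real.exp (t * a) ^ 2 * (r0 0 ^ 2 + r0 1 ^ 2) := by
        linear_combination (Real.exp (t * a) ^ 2 * (r0 0 ^ 2 + r0 1 ^ 2)) * hcs
      rw [heq]
      have he1 : Real.exp (t * a) ≤ 1 := Real.exp_le_one_iff.mpr (by nlinarith)
      have hp1 : (0:ℝ) ≤ Real.exp (t * a) := (Real.exp_pos _).le
      have hq1 : Real.exp (t * a) ^ 2 ≤ 1 := by nlinarith
      nlinarith [mul_le_mul_of_nonneg_right hq1
        (by positivity : (0:ℝ) ≤ r0 0 ^ 2 + r0 1 ^ 2)]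
    · obtain ⟨r0, hr0⟩ := hcurv
      exact absurd (tendsto_curv2_rot a b (lt_of_not_ge hst) r0) hr0
  · -- Jordan block case
    by_cases hst : l < 0
    · set M : ℝ := (1 - l) / (-l) with hM
      have hMpos : 0 < M := by
        apply div_pos <;> linarith
      refine ⟨ε / (2 * M), by positivity, fun r0 hr0 t ht => ?_⟩
      rw [exp_jordan]
      have h0 : (!![Real.exp (t * l), t * Real.exp (t * l); 0, Real.exp (t * l)] *ᵥ r0) 0
          = Real.exp (t * l) * r0 0 + t * Real.exp (t * l) * r0 1 := by
        simp [Matrix.mulVec, dotProduct, Fin.sum_univ_two]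
      have h1 : (!![Real.exp (t * l), t * Real.exp (t * l); 0, Real.exp (t * l)] *ᵥ r0) 1
          = Real.exp (t * l) * r0 1 := by
        simp [Matrix.mulVec, dotProduct, Fin.sum_univ_two]
      unfold e2norm at hr0 ⊢
      simp only [Fin.sum_univ_two] at hr0 ⊢
      rw [h0, h1]
      have hgrow : (1 + t) * Real.exp (t * l) ≤ M := jordan_growth hst ht
      have hE0 : (0:ℝ) < Real.exp (t * l) := Real.exp_pos _
      have hkey : (Real.exp (t * l) * r0 0 + t * Real.exp (t * l) * r0 1) ^ 2
          + (Real.exp (t * l) * r0 1) ^ 2 ≤ (2 * M) ^ 2 * (r0 0 ^ 2 + r0 1 ^ 2) := by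
        have q1 : (Real.exp (t * l)) ^ 2 ≤ M ^ 2 := by
          nlinarith [mul_nonneg ht hE0.le]
        have q2 : (t * Real.exp (t * l)) ^ 2 ≤ M ^ 2 := by
          nlinarith [mul_nonneg ht hE0.le]
        nlinarith [sq_nonneg (Real.exp (t * l) * r0 0 - t * Real.exp (t * l) * r0 1),
          mul_le_mul_of_nonneg_right q1 (sq_nonneg (r0 0)),
          mul_le_mul_of_nonneg_right q1 (sq_nonneg (r0 1)),
          mul_le_mul_of_nonneg_right q2 (sq_nonneg (r0 0)),
          mul_le_mul_of_nonneg_right q2 (sq_nonneg (r0 1)),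
          mul_nonneg (sq_nonneg M) (sq_nonneg (r0 0)),
          mul_nonneg (sq_nonneg M) (sq_nonneg (r0 1))]
      calc Real.sqrt ((Real.exp (t * l) * r0 0 + t * Real.exp (t * l) * r0 1) ^ 2
            + (Real.exp (t * l) * r0 1) ^ 2)
          ≤ Real.sqrt ((2 * M) ^ 2 * (r0 0 ^ 2 + r0 1 ^ 2)) := Real.sqrt_le_sqrt hkey
        _ = (2 * M) * Real.sqrt (r0 0 ^ 2 + r0 1 ^ 2) := by
            rw [Real.sqrt_mul (sq_nonneg _), Real.sqrt_sq (by positivity : (0:ℝ) ≤ 2 * M)]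
        _ < (2 * M) * (ε / (2 * M)) := by
            apply mul_lt_mul_of_pos_left hr0 (by positivity)
        _ = ε := by field_simp
    · obtain ⟨r0, hr0⟩ := hcurv
      exact absurd (tendsto_curv2_jordan l (le_of_not_gt hst) r0) hr0
end

section
/- Let A be a 2×2 real matrix in real Jordan canonical form and suppose there exists an initial value r(0) ∈ ℝ² such that the curvature κ(t) of the trajectory r(t) = e^{tA}r(0) tends to +∞ as t → +∞. Then both eigenvalues of A have negative real part (hence the zero solution of ṙ = Ar is asymptotically stable). -/
open Matrix Filter

/-! ### Auxiliary material -/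

attribute [local instance] Matrix.linftyOpNormedRing Matrix.linftyOpNormedAlgebra

namespace Curv2Aux

/-- exp of a real 2×2 diagonal matrix. -/
theorem exp_diag (t l1 l2 : ℝ) :
    NormedSpace.exp (t • (Matrix.diagonal ![l1, l2])) =
      Matrix.diagonal ![Real.exp (t*l1), Real.exp (t*l2)] := by
  rw [show t • (Matrix.diagonal ![l1, l2]) = Matrix.diagonal ![t*l1, t*l2] by
    ext i j; fin_cases i <;> fin_cases j <;> simp [Matrix.diagonal_apply]]
  rw [Matrix.exp_diagonal]
  ext i j
  fin_cases i <;> fin_cases j <;> simp [Pi.exp_def, ← Real.exp_eq_exp_ℝ]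

noncomputable def phi : ℂ →ₐ[ℝ] Matrix (Fin 2) (Fin 2) ℝ := Algebra.leftMulMatrix Complex.basisOneI

theorem phi_apply (z : ℂ) : phi z = !![z.re, -z.im; z.im, z.re] := Algebra.leftMulMatrix_complex z

/-- exp of a real 2×2 rotation-form matrix. -/
theorem exp_rot (t a b : ℝ) :
    NormedSpace.exp (t • (!![a, b; -b, a] : Matrix (Fin 2) (Fin 2) ℝ)) =
      Real.exp (t*a) • !![Real.cos (t*b), Real.sin (t*b); -Real.sin (t*b), Real.cos (t*b)] := by
  have hA : (!![a, b; -b, a] : Matrix (Fin 2) (Fin 2) ℝ) = phi (Complex.mk a (-b)) := by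
    rw [phi_apply]; norm_num
  have hsmul : t • (!![a, b; -b, a] : Matrix (Fin 2) (Fin 2) ℝ) = phi (t • Complex.mk a (-b)) := by
    rw [hA, _root_.map_smul]
  rw [hsmul]
  erw [← NormedSpace.map_exp phi (LinearMap.continuous_of_finiteDimensional phi.toLinearMap)]
  have h2 : NormedSpace.exp (t • Complex.mk a (-b)) = Complex.exp (t • Complex.mk a (-b)) := by
    rw [Complex.exp_eq_exp_ℂ]
  rw [h2]
  have hz : (t • Complex.mk a (-b)) = Complex.mk (t*a) (-(t*b)) := by
    simp [Complex.ext_iff, Complex.smul_re, Complex.smul_im]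
  rw [hz, Complex.exp_eq_exp_re_mul_sin_add_cos]
  rw [phi_apply]
  ext i j
  fin_cases i <;> fin_cases j <;>
    simp [Complex.add_re, Complex.mul_re, Complex.mul_im, Real.cos_neg, Real.sin_neg,
      ← Complex.ofReal_mul, Complex.exp_ofReal_re, Complex.exp_ofReal_im,
      Complex.cos_ofReal_re, Complex.cos_ofReal_im, Complex.sin_ofReal_re,
      Complex.sin_ofReal_im] <;> ring

theorem exp_sq_zero {𝔸 : Type*} [NormedRing 𝔸] [NormedAlgebra ℝ 𝔸] [CompleteSpace 𝔸]
    (x : 𝔸) (hx : x ^ 2 = 0) : NormedSpace.exp x = 1 + x := by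
  rw [NormedSpace.exp_eq_tsum ℝ]
  beta_reduce
  rw [tsum_eq_sum (s := {0, 1}) ?_]
  · simp [Finset.sum_pair (by norm_num : (0:ℕ) ≠ 1)]
  · intro n hn
    have h2 : 2 ≤ n := by
      rcases n with _ | _ | n
      · simp at hn
      · simp at hn
      · omega
    have : x ^ n = 0 := by
      calc x ^ n = x ^ 2 * x ^ (n - 2) := by rw [← pow_add]; congr 1; omega
      _ = 0 := by rw [hx, zero_mul]
    simp [this]

/-- exp of a real 2×2 Jordan block. -/
theorem exp_jordan (t l : ℝ) :
    NormedSpace.exp (t • (!![l, 1; 0, l] : Matrix (Fin 2) (Fin 2) ℝ)) =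
      Real.exp (t*l) • !![1, t; 0, 1] := by
  have hsplit : t • (!![l, 1; 0, l] : Matrix (Fin 2) (Fin 2) ℝ) =
      Matrix.diagonal ![t*l, t*l] + !![0, t; 0, 0] := by
    ext i j; fin_cases i <;> fin_cases j <;> simp [Matrix.diagonal_apply]
  have hcomm : Commute (Matrix.diagonal ![t*l, t*l]) (!![0, t; 0, 0] : Matrix (Fin 2) (Fin 2) ℝ) := by
    unfold Commute SemiconjBy
    ext i j; fin_cases i <;> fin_cases j <;>
      simp [Matrix.mul_apply, Fin.sum_univ_two, Matrix.diagonal_apply] <;> ring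
  have hnil : (!![0, t; 0, 0] : Matrix (Fin 2) (Fin 2) ℝ) ^ 2 = 0 := by
    ext i j; fin_cases i <;> fin_cases j <;>
      simp [pow_two, Matrix.mul_apply, Fin.sum_univ_two]
  rw [hsplit, Matrix.exp_add_of_commute _ _ hcomm]
  erw [exp_sq_zero _ hnil]
  have hd : NormedSpace.exp (Matrix.diagonal ![t*l, t*l]) =
      Matrix.diagonal ![Real.exp (t*l), Real.exp (t*l)] := by
    rw [Matrix.exp_diagonal]
    ext i j; fin_cases i <;> fin_cases j <;> simp [Pi.exp_def, ← Real.exp_eq_exp_ℝ]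
  rw [hd]
  ext i j; fin_cases i <;> fin_cases j <;>
    simp [Matrix.mul_apply, Fin.sum_univ_two, Matrix.diagonal_apply]

/-! ### Explicit formulas for the curvature -/

theorem curv2_diag (l1 l2 x y t : ℝ) : curv2 (Matrix.diagonal ![l1,l2]) ![x,y] t =
    |l1 * l2 * (l2 - l1) * x * y| * (Real.exp (t*l1) * Real.exp (t*l2)) /
      ((l1 * (Real.exp (t*l1)*x))^2 + (l2 * (Real.exp (t*l2)*y))^2) ^ ((3:ℝ)/2) := by
  rw [curv2]
  simp only [exp_diag]
  simp only [Matrix.mulVec, dotProduct, Fin.sum_univ_two, Matrix.mul_apply,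
    Matrix.diagonal_apply, Matrix.cons_val_zero, Matrix.cons_val_one, Matrix.head_cons,
    if_true, if_neg (by decide : ¬(0:Fin 2) = 1), if_neg (by decide : ¬(1:Fin 2) = 0),
    reduceIte, zero_mul, mul_zero, add_zero, zero_add]
  rw [show l1 * (Real.exp (t * l1) * x) * (l2 * l2 * (Real.exp (t * l2) * y)) -
        l1 * l1 * (Real.exp (t * l1) * x) * (l2 * (Real.exp (t * l2) * y)) =
      (l1 * l2 * (l2 - l1) * x * y) * (Real.exp (t*l1) * Real.exp (t*l2)) from by ring,
    abs_mul, abs_of_pos (by positivity : (0:ℝ) < Real.exp (t*l1) * Real.exp (t*l2))]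

theorem curv2_rot (a b x y t : ℝ) (hb : 0 ≤ b) : curv2 !![a, b; -b, a] ![x,y] t =
    b * ((a^2+b^2) * (x^2+y^2)) * Real.exp (t*a)^2 /
      (((a^2+b^2) * (x^2+y^2)) * Real.exp (t*a)^2) ^ ((3:ℝ)/2) := by
  have hsc : Real.sin (t*b)^2 + Real.cos (t*b)^2 = 1 := Real.sin_sq_add_cos_sq _
  rw [curv2]
  simp only [exp_rot]
  simp [Matrix.mulVec, dotProduct, Fin.sum_univ_two, Matrix.mul_apply]
  rw [show (a * (Real.exp (t * a) * Real.cos (t * b) * x + Real.exp (t * a) * Real.sin (t * b) * y) +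
            b * (-(Real.exp (t * a) * Real.sin (t * b) * x) + Real.exp (t * a) * Real.cos (t * b) * y)) *
          ((-(b * a) + -(a * b)) * (Real.exp (t * a) * Real.cos (t * b) * x + Real.exp (t * a) * Real.sin (t * b) * y) +
            (-(b * b) + a * a) *
              (-(Real.exp (t * a) * Real.sin (t * b) * x) + Real.exp (t * a) * Real.cos (t * b) * y)) -
        ((a * a + -(b * b)) * (Real.exp (t * a) * Real.cos (t * b) * x + Real.exp (t * a) * Real.sin (t * b) * y) +
            (a * b + b * a) * (-(Real.exp (t * a) * Real.sin (t * b) * x) + Real.exp (t * a) * Real.cos (t * b) * y)) *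
          (-(b * (Real.exp (t * a) * Real.cos (t * b) * x + Real.exp (t * a) * Real.sin (t * b) * y)) +
            a * (-(Real.exp (t * a) * Real.sin (t * b) * x) + Real.exp (t * a) * Real.cos (t * b) * y)) =
      -(b * ((a^2+b^2) * (x^2+y^2)) * Real.exp (t*a)^2) from by
        linear_combination (-(b * (a^2+b^2) * Real.exp (t*a)^2 * (x^2+y^2))) * hsc]
  rw [show ((a * (Real.exp (t * a) * Real.cos (t * b) * x + Real.exp (t * a) * Real.sin (t * b) * y) +
              b * (-(Real.exp (t * a) * Real.sin (t * b) * x) + Real.exp (t * a) * Real.cos (t * b) * y)) ^ 2 +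
          (-(b * (Real.exp (t * a) * Real.cos (t * b) * x + Real.exp (t * a) * Real.sin (t * b) * y)) +
              a * (-(Real.exp (t * a) * Real.sin (t * b) * x) + Real.exp (t * a) * Real.cos (t * b) * y)) ^ 2) =
      ((a^2+b^2) * (x^2+y^2)) * Real.exp (t*a)^2 from by
        linear_combination ((a^2+b^2) * Real.exp (t*a)^2 * (x^2+y^2)) * hsc]
  rw [abs_neg, abs_of_nonneg (by positivity)]

theorem curv2_jordan (l x y t : ℝ) : curv2 !![l, 1; 0, l] ![x,y] t =
    l^2 * y^2 * Real.exp (t*l)^2 /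
      ((l * (Real.exp (t*l) * y))^2 + (Real.exp (t*l) * (l*x + l*(t*y) + y))^2) ^ ((3:ℝ)/2) := by
  rw [curv2]
  simp only [exp_jordan]
  simp [Matrix.mulVec, dotProduct, Fin.sum_univ_two, Matrix.mul_apply]
  rw [show (l * (Real.exp (t * l) * x + Real.exp (t * l) * t * y) + Real.exp (t * l) * y) *
          (l * l * (Real.exp (t * l) * y)) -
        (l * l * (Real.exp (t * l) * x + Real.exp (t * l) * t * y) + (l + l) * (Real.exp (t * l) * y)) *
          (l * (Real.exp (t * l) * y)) =
      -(l^2 * y^2 * Real.exp (t*l)^2) from by ring]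
  rw [show ((l * (Real.exp (t * l) * x + Real.exp (t * l) * t * y) + Real.exp (t * l) * y) ^ 2 +
          (l * (Real.exp (t * l) * y)) ^ 2) =
      ((l * (Real.exp (t*l) * y))^2 + (Real.exp (t*l) * (l*x + l*(t*y) + y))^2) from by ring]
  rw [abs_neg, abs_of_nonneg (by positivity)]

/-! ### Bounding lemmas -/

theorem sq_rpow_three_halves (u : ℝ) (hu : 0 ≤ u) : (u^2 : ℝ) ^ ((3:ℝ)/2) = u^3 := by
  rw [← Real.rpow_natCast u 2, ← Real.rpow_mul hu, ← Real.rpow_natCast u 3]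
  norm_num

theorem denom_ge (u w : ℝ) (hw : 0 ≤ w) : |u|^3 ≤ (u^2 + w) ^ ((3:ℝ)/2) := by
  have h0 : (u^2 : ℝ) ^ ((3:ℝ)/2) = |u|^3 := by
    rw [← sq_abs u, sq_rpow_three_halves |u| (abs_nonneg u)]
  rw [← h0]
  exact Real.rpow_le_rpow (by positivity) (by linarith) (by norm_num)

theorem not_top_of_bdd {f : ℝ → ℝ} {K : ℝ} (h : ∀ t, 0 ≤ t → f t ≤ K) :
    ¬ Filter.Tendsto f Filter.atTop Filter.atTop := by
  intro hT
  obtain ⟨t, h1, h2⟩ := ((hT.eventually_gt_atTop K).and (Filter.eventually_ge_atTop 0)).exists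
  exact absurd (h t h2) (not_le.mpr h1)

theorem diag_bdd (l1 l2 x y : ℝ) (h1 : 0 ≤ l1) (h2 : l2 ≤ l1) :
    ∃ K, ∀ t, 0 ≤ t → curv2 (Matrix.diagonal ![l1,l2]) ![x,y] t ≤ K := by
  by_cases hC : l1 * l2 * (l2 - l1) * x * y = 0
  · exact ⟨0, fun t ht => by rw [curv2_diag, hC]; simp⟩
  · have hlx : l1 * x ≠ 0 := fun h => hC (by
      rcases mul_eq_zero.mp h with h' | h' <;> simp [h'])
    refine ⟨|l1 * l2 * (l2 - l1) * x * y| / |l1*x|^3, fun t ht => ?_⟩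
    rw [curv2_diag]
    set C := |l1 * l2 * (l2 - l1) * x * y| with hCdef
    set E1 := Real.exp (t*l1) with hE1def
    set E2 := Real.exp (t*l2) with hE2def
    have hE1 : 0 < E1 := Real.exp_pos _
    have hE2 : 0 < E2 := Real.exp_pos _
    have habs : 0 < |l1*x| := abs_pos.mpr hlx
    have hden : |l1*x|^3 * E1^3 ≤ ((l1 * (E1*x))^2 + (l2 * (E2*y))^2) ^ ((3:ℝ)/2) := by
      have h := denom_ge (l1 * (E1*x)) ((l2 * (E2*y))^2) (by positivity)
      calc |l1*x|^3 * E1^3 = |l1 * (E1*x)|^3 := by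
            rw [abs_mul, abs_mul, abs_mul, abs_of_pos hE1]; ring
        _ ≤ _ := h
    calc C * (E1*E2) / ((l1 * (E1*x))^2 + (l2 * (E2*y))^2) ^ ((3:ℝ)/2)
        ≤ C * (E1*E2) / (|l1*x|^3 * E1^3) := by
          apply div_le_div_of_nonneg_left (by positivity) (by positivity) hden
      _ = (C / |l1*x|^3) * Real.exp (t*l2 - 2*(t*l1)) := by
          rw [Real.exp_sub, two_mul, Real.exp_add, ← hE1def, ← hE2def]
          field_simp
      _ ≤ (C / |l1*x|^3) * 1 := by
          apply mul_le_mul_of_nonneg_left _ (by positivity)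
          rw [show (1:ℝ) = Real.exp 0 from (Real.exp_zero).symm]
          apply Real.exp_le_exp.mpr
          nlinarith
      _ = C / |l1*x|^3 := mul_one _

theorem curv2_diag_swap (l1 l2 x y t : ℝ) :
    curv2 (Matrix.diagonal ![l1,l2]) ![x,y] t = curv2 (Matrix.diagonal ![l2,l1]) ![y,x] t := by
  rw [curv2_diag, curv2_diag]
  rw [show |l2 * l1 * (l1 - l2) * y * x| = |l1 * l2 * (l2 - l1) * x * y| from by
    rw [show l2 * l1 * (l1 - l2) * y * x = -(l1 * l2 * (l2 - l1) * x * y) from by ring, abs_neg]]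
  rw [mul_comm (Real.exp (t*l2)) (Real.exp (t*l1)),
    add_comm ((l2 * (Real.exp (t*l2)*y))^2) ((l1 * (Real.exp (t*l1)*x))^2)]

theorem diag_neg (l1 l2 x y : ℝ)
    (hT : Tendsto (curv2 (Matrix.diagonal ![l1,l2]) ![x,y]) atTop atTop) : l1 < 0 := by
  by_contra hc
  push_neg at hc
  rcases le_total l2 l1 with hle | hle
  · obtain ⟨K, hK⟩ := diag_bdd l1 l2 x y hc hle
    exact not_top_of_bdd hK hT
  · obtain ⟨K, hK⟩ := diag_bdd l2 l1 y x (le_trans hc hle) hle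
    have hT' : Tendsto (curv2 (Matrix.diagonal ![l2,l1]) ![y,x]) atTop atTop := by
      have : curv2 (Matrix.diagonal ![l1,l2]) ![x,y] = curv2 (Matrix.diagonal ![l2,l1]) ![y,x] :=
        funext fun t => curv2_diag_swap l1 l2 x y t
      rwa [this] at hT
    exact not_top_of_bdd hK hT'

theorem rot_bdd (a b x y : ℝ) (hb : 0 ≤ b) (ha : 0 ≤ a) :
    ∃ K, ∀ t, 0 ≤ t → curv2 !![a, b; -b, a] ![x,y] t ≤ K := by
  set X := (a^2+b^2) * (x^2+y^2) with hXdef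
  have hX0 : 0 ≤ X := by positivity
  by_cases hX : X = 0
  · refine ⟨0, fun t ht => ?_⟩
    rw [curv2_rot a b x y t hb, ← hXdef, hX]
    simp
  · have hXpos : 0 < X := lt_of_le_of_ne hX0 (Ne.symm hX)
    refine ⟨b * X / X ^ ((3:ℝ)/2), fun t ht => ?_⟩
    rw [curv2_rot a b x y t hb, ← hXdef]
    set E := Real.exp (t*a) with hEdef
    have hE : 0 < E := Real.exp_pos _
    have hE1 : 1 ≤ E := by
      rw [hEdef, show (1:ℝ) = Real.exp 0 from (Real.exp_zero).symm]
      exact Real.exp_le_exp.mpr (by positivity)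
    have hXr : 0 < X ^ ((3:ℝ)/2) := Real.rpow_pos_of_pos hXpos _
    calc b * X * E^2 / (X * E^2) ^ ((3:ℝ)/2)
        = b * X * E^2 / (X ^ ((3:ℝ)/2) * E^3) := by
          rw [Real.mul_rpow hX0 (by positivity), sq_rpow_three_halves E hE.le]
      _ = (b * X / X ^ ((3:ℝ)/2)) * (1/E) := by field_simp
      _ ≤ (b * X / X ^ ((3:ℝ)/2)) * 1 := by
          apply mul_le_mul_of_nonneg_left _ (by positivity)
          rw [div_le_one hE]; exact hE1
      _ = b * X / X ^ ((3:ℝ)/2) := mul_one _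

theorem jordan_bdd (l x y : ℝ) (hl : 0 ≤ l) :
    ∃ K, ∀ t, 0 ≤ t → curv2 !![l, 1; 0, l] ![x,y] t ≤ K := by
  by_cases hly : l * y = 0
  · refine ⟨0, fun t ht => ?_⟩
    rw [curv2_jordan, show l^2 * y^2 = (l*y)^2 from by ring, hly]
    simp
  · refine ⟨l^2 * y^2 / |l*y|^3, fun t ht => ?_⟩
    rw [curv2_jordan]
    set E := Real.exp (t*l) with hEdef
    have hE : 0 < E := Real.exp_pos _
    have habs : 0 < |l*y| := abs_pos.mpr hly
    have hden : |l*y|^3 * E^3 ≤ ((l * (E*y))^2 + (E * (l*x + l*(t*y) + y))^2) ^ ((3:ℝ)/2) := by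
      have h := denom_ge (l * (E*y)) ((E * (l*x + l*(t*y) + y))^2) (by positivity)
      calc |l*y|^3 * E^3 = |l * (E*y)|^3 := by
            rw [abs_mul, abs_mul, abs_mul, abs_of_pos hE]; ring
        _ ≤ _ := h
    have hE1 : 1 ≤ E := by
      rw [hEdef, show (1:ℝ) = Real.exp 0 from (Real.exp_zero).symm]
      exact Real.exp_le_exp.mpr (by positivity)
    calc l^2 * y^2 * E^2 / ((l * (E*y))^2 + (E * (l*x + l*(t*y) + y))^2) ^ ((3:ℝ)/2)
        ≤ l^2 * y^2 * E^2 / (|l*y|^3 * E^3) := by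
          apply div_le_div_of_nonneg_left (by positivity) (by positivity) hden
      _ = (l^2 * y^2 / |l*y|^3) * (1/E) := by field_simp
      _ ≤ (l^2 * y^2 / |l*y|^3) * 1 := by
          apply mul_le_mul_of_nonneg_left _ (by positivity)
          rw [div_le_one hE]; exact hE1
      _ = l^2 * y^2 / |l*y|^3 := mul_one _

/-! ### Characteristic polynomial roots -/

theorem root_eq (M : Matrix (Fin 2) (Fin 2) ℂ) {μ : ℂ} (h : μ ∈ M.charpoly.roots) :
    (μ - M 0 0) * (μ - M 1 1) - M 0 1 * M 1 0 = 0 := by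
  have h2 := (Polynomial.mem_roots'.mp h).2
  have hc : M.charpoly = (Polynomial.X - Polynomial.C (M 0 0)) * (Polynomial.X - Polynomial.C (M 1 1))
      - Polynomial.C (M 0 1) * Polynomial.C (M 1 0) := by
    rw [Matrix.charpoly, Matrix.det_fin_two]
    simp [Matrix.charmatrix_apply]
  rw [Polynomial.IsRoot, hc] at h2
  simpa using h2

end Curv2Aux

theorem eigenvalues_neg_of_curvature_tendsto_top_2d
    (A : Matrix (Fin 2) (Fin 2) ℝ)
    (hJordan : (∃ l1 l2 : ℝ, A = Matrix.diagonal ![l1, l2]) ∨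
      (∃ a b : ℝ, 0 < b ∧ A = !![a, b; -b, a]) ∨
      (∃ l : ℝ, A = !![l, 1; 0, l]))
    (hcurv : ∃ r0 : Fin 2 → ℝ, Tendsto (curv2 A r0) atTop atTop) :
    ∀ μ ∈ (A.map (Complex.ofReal ·)).charpoly.roots, μ.re < 0 := by
  obtain ⟨r0, hT⟩ := hcurv
  have hr0 : r0 = ![r0 0, r0 1] := by funext i; fin_cases i <;> rfl
  rw [hr0] at hT
  intro μ hμ
  rcases hJordan with ⟨l1, l2, rfl⟩ | ⟨a, b, hb, rfl⟩ | ⟨l, rfl⟩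
  · -- diagonal case
    have hroot := Curv2Aux.root_eq _ hμ
    simp [Matrix.map_apply, Matrix.diagonal_apply] at hroot
    have h1 : l1 < 0 := Curv2Aux.diag_neg l1 l2 (r0 0) (r0 1) hT
    have h2 : l2 < 0 := by
      apply Curv2Aux.diag_neg l2 l1 (r0 1) (r0 0)
      have : curv2 (Matrix.diagonal ![l1,l2]) ![r0 0, r0 1] =
          curv2 (Matrix.diagonal ![l2,l1]) ![r0 1, r0 0] :=
        funext fun t => Curv2Aux.curv2_diag_swap l1 l2 (r0 0) (r0 1) t
      rwa [this] at hT
    rcases hroot with h | h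
    · rw [sub_eq_zero] at h; rw [h]; simpa using h1
    · rw [sub_eq_zero] at h; rw [h]; simpa using h2
  · -- rotation case
    have hroot := Curv2Aux.root_eq _ hμ
    simp [Matrix.map_apply] at hroot
    have ha : a < 0 := by
      by_contra hc
      push_neg at hc
      obtain ⟨K, hK⟩ := Curv2Aux.rot_bdd a b (r0 0) (r0 1) hb.le hc
      exact Curv2Aux.not_top_of_bdd hK hT
    have hfac : (μ - (Complex.mk a b)) * (μ - (Complex.mk a (-b))) = 0 := by
      have hab : (Complex.mk a b) = (a : ℂ) + (b:ℂ) * Complex.I := by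
        simp [Complex.ext_iff]
      have hab' : (Complex.mk a (-b)) = (a : ℂ) - (b:ℂ) * Complex.I := by
        simp [Complex.ext_iff]
      rw [hab, hab']
      linear_combination hroot - Complex.I_sq * (b:ℂ) * (b:ℂ)
    rcases mul_eq_zero.mp hfac with h | h
    · rw [sub_eq_zero] at h; rw [h]; simpa using ha
    · rw [sub_eq_zero] at h; rw [h]; simpa using ha
  · -- Jordan block case
    have hroot := Curv2Aux.root_eq _ hμ
    simp [Matrix.map_apply] at hroot
    have hl : l < 0 := by
      by_contra hc
      push_neg at hc
      obtain ⟨K, hK⟩ := Curv2Aux.jordan_bdd l (r0 0) (r0 1) hc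
      exact Curv2Aux.not_top_of_bdd hK hT
    rw [sub_eq_zero] at hroot
    rw [hroot]; simpa using hl
end
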